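/- arXiv:1606.07824 — 2 statements merged into one kernel-verified Lean document; each statement's English description precedes it below -/
import Mathlib

section
/- (Hironaka's formal division algorithm.) Let A be an integral domain with fraction field K, let Φ_1,…,Φ_q ∈ A[[x]]^p be nonzero with (α_i,j_i) := exp Φ_i and associated partition Δ_1,…,Δ_q,Δ of ℕ^n×{1,…,p}, let S be the multiplicative subset of A generated by the initial coefficients Φ_{i,(α_i,j_i)} (i = 1,…,q), and let B be any subring of K containing the localization S^{-1}A. Then for every F ∈ B[[x]]^p there exist unique Q_1,…,Q_q ∈ B[[x]] and R ∈ B[[x]]^p such that F = Σ_{i=1}^q Q_i·Φ_i + R, with (α_i,j_i) + supp Q_i ⊆ Δ_i for each i and supp R ⊆ Δ. Moreover, if F ≠ 0 then (α_i,j_i) + exp Q_i ≥ exp F for every i with Q_i ≠ 0, and exp R ≥ exp F if R ≠ 0. -/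
namespace QDiv

/-- Index set ℕ^n × {1,…,p}. -/
abbrev Idx (n p : ℕ) := (Fin n →₀ ℕ) × Fin p

variable {n p q : ℕ}

/-- Value of the positive linear form `L` on a multi-index. -/
noncomputable def lval (L : Fin n → ℝ) (α : Fin n →₀ ℕ) : ℝ := ∑ i, L i * (α i : ℝ)

/-- Lexicographic order on multi-indices. -/
def mlexLt (a b : Fin n →₀ ℕ) : Prop := ∃ i : Fin n, (∀ j < i, a j = b j) ∧ a i < b i

/-- The order on `ℕ^n` given by comparing `(L α, α)` lexicographically. -/
def sLt (L : Fin n → ℝ) (a b : Fin n →₀ ℕ) : Prop :=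
  lval L a < lval L b ∨ (lval L a = lval L b ∧ mlexLt a b)

/-- The total order on `ℕ^n × {1,…,p}` given by comparing `(L α, j, α)` lexicographically. -/
def idxLt (L : Fin n → ℝ) (a b : Idx n p) : Prop :=
  lval L a.1 < lval L b.1 ∨
    (lval L a.1 = lval L b.1 ∧ (a.2 < b.2 ∨ (a.2 = b.2 ∧ mlexLt a.1 b.1)))

def idxLe (L : Fin n → ℝ) (a b : Idx n p) : Prop := ¬ idxLt L b a

section CommRing

variable {A : Type*} [CommRing A]

/-- The support of a `p`-tuple of formal power series. -/
def suppT (F : Fin p → MvPowerSeries (Fin n) A) : Set (Idx n p) :=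
  {e | MvPowerSeries.coeff e.1 (F e.2) ≠ 0}

/-- The support of a single formal power series. -/
def suppS (f : MvPowerSeries (Fin n) A) : Set (Fin n →₀ ℕ) :=
  {α | MvPowerSeries.coeff α f ≠ 0}

/-- `e` is the initial exponent `exp F` of the tuple `F`. -/
def IsExp (L : Fin n → ℝ) (F : Fin p → MvPowerSeries (Fin n) A) (e : Idx n p) : Prop :=
  e ∈ suppT F ∧ ∀ d ∈ suppT F, ¬ idxLt L d e

/-- `β` is the initial exponent of the scalar series `f`. -/
def IsExpS (L : Fin n → ℝ) (f : MvPowerSeries (Fin n) A) (β : Fin n →₀ ℕ) : Prop :=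
  β ∈ suppS f ∧ ∀ γ ∈ suppS f, ¬ sLt L γ β

/-- The diagram of initial exponents `N(M)` of a submodule `M ⊆ A[[x]]^p`. -/
def diagram (L : Fin n → ℝ)
    (M : Submodule (MvPowerSeries (Fin n) A) (Fin p → MvPowerSeries (Fin n) A)) :
    Set (Idx n p) :=
  {e | ∃ F ∈ M, IsExp L F e}

/-- `N + ℕ^n`. -/
def shift (N : Set (Idx n p)) : Set (Idx n p) :=
  {e | ∃ d ∈ N, ∃ β : Fin n →₀ ℕ, e = (d.1 + β, d.2)}

/-- A vertex of a diagram `N`. -/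
def IsVertex (N : Set (Idx n p)) (e : Idx n p) : Prop :=
  e ∈ N ∧ shift (N \ {e}) ≠ N

/-- The "cone" `(α,j) + ℕ^n` over a single index. -/
def cone (d : Idx n p) : Set (Idx n p) :=
  {e | e.2 = d.2 ∧ ∃ β : Fin n →₀ ℕ, e.1 = d.1 + β}

/-- The pieces `Δ_i` of the partition of `ℕ^n × {1,…,p}` associated with
initial exponents `v 1, …, v q`. -/
def Delta (v : Fin q → Idx n p) (i : Fin q) : Set (Idx n p) :=
  cone (v i) \ ⋃ (k : Fin q) (_ : k < i), cone (v k)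

/-- The remaining piece `Δ` of the partition. -/
def DeltaC (v : Fin q → Idx n p) : Set (Idx n p) := (⋃ i, cone (v i))ᶜ

/-- The monomial tuple `x^{(α,j)}`. -/
noncomputable def xMon (e : Idx n p) : Fin p → MvPowerSeries (Fin n) A := fun j =>
  if j = e.2 then MvPowerSeries.monomial e.1 1 else 0

/-- All coefficients of a scalar series satisfy a predicate `P`
(e.g. membership in a subring of `K`). -/
def coeffsIn (P : A → Prop) (f : MvPowerSeries (Fin n) A) : Prop :=
  ∀ α : Fin n →₀ ℕ, P (MvPowerSeries.coeff α f)

/-- All coefficients of a tuple of series satisfy `P`. -/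
def coeffsInT (P : A → Prop) (F : Fin p → MvPowerSeries (Fin n) A) : Prop :=
  ∀ j, coeffsIn P (F j)

/-- `G` belongs to the `B[[x]]`-submodule of `B[[x]]^p` generated by the set `Mset`,
where `B[[x]]` is the ring of series all of whose coefficients satisfy `P`. -/
def inSpanP (P : A → Prop) (Mset : Set (Fin p → MvPowerSeries (Fin n) A))
    (G : Fin p → MvPowerSeries (Fin n) A) : Prop :=
  ∃ (k : ℕ) (c : Fin k → MvPowerSeries (Fin n) A)
    (m : Fin k → (Fin p → MvPowerSeries (Fin n) A)),
    (∀ l, coeffsIn P (c l)) ∧ (∀ l, m l ∈ Mset) ∧ ∀ j, G j = ∑ l, c l * m l j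

/-- Membership in the image of the localization `S⁻¹A` inside the fraction field `K`. -/
def locMem {K : Type*} [Field K] [Algebra A K] (S : Submonoid A) (x : K) : Prop :=
  ∃ a : A, ∃ s ∈ S, x * algebraMap A K s = algebraMap A K a

/-- The multiplicative subset generated by the initial coefficients of `Φ_1,…,Φ_q`, given
their initial exponents `v i`. -/
def initCoeffMonoid (Φ : Fin q → (Fin p → MvPowerSeries (Fin n) A)) (v : Fin q → Idx n p) :
    Submonoid A :=
  Submonoid.closure (Set.range fun i => MvPowerSeries.coeff (v i).1 (Φ i (v i).2))

/-- Strict order on diagrams: lexicographic comparison of the increasing sequences of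
vertices (padded by `∞`). Equivalently: the smallest index at which the vertex sets
differ is a vertex of the first diagram. -/
def DiagLT (L : Fin n → ℝ) (N₁ N₂ : Set (Idx n p)) : Prop :=
  ∃ e, IsVertex N₁ e ∧ ¬ IsVertex N₂ e ∧ ∀ d, idxLt L d e → (IsVertex N₁ d ↔ IsVertex N₂ d)

/-- Order on diagrams. -/
def DiagLE (L : Fin n → ℝ) (N₁ N₂ : Set (Idx n p)) : Prop :=
  (∀ e, IsVertex N₁ e ↔ IsVertex N₂ e) ∨ DiagLT L N₁ N₂

end CommRing

end QDiv

namespace QDiv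


section Aux
variable {n p q : ℕ}

lemma lval_add (L : Fin n → ℝ) (a b : Fin n →₀ ℕ) : lval L (a + b) = lval L a + lval L b := by
  simp only [lval, Finsupp.add_apply, ← Finset.sum_add_distrib]
  apply Finset.sum_congr rfl; intro i _; push_cast; ring

lemma mlexLt_irrefl (a : Fin n →₀ ℕ) : ¬ mlexLt a a := by
  rintro ⟨i, _, h⟩; exact lt_irrefl _ h

lemma mlexLt_trans {a b c : Fin n →₀ ℕ} (h1 : mlexLt a b) (h2 : mlexLt b c) : mlexLt a c := by
  obtain ⟨i, hi, hlt⟩ := h1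
  obtain ⟨i', hi', hlt'⟩ := h2
  rcases lt_trichotomy i i' with h | h | h
  · exact ⟨i, fun j hj => (hi j hj).trans (hi' j (hj.trans h)), hi' i h ▸ hlt⟩
  · subst h; exact ⟨i, fun j hj => (hi j hj).trans (hi' j hj), hlt.trans hlt'⟩
  · exact ⟨i', fun j hj => (hi j (hj.trans h)).trans (hi' j hj), (hi i' h).symm ▸ hlt'⟩

lemma mlexLt_trichotomy {a b : Fin n →₀ ℕ} (h : a ≠ b) : mlexLt a b ∨ mlexLt b a := by
  classical
  have hs : (Finset.univ.filter fun i => a i ≠ b i).Nonempty := by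
    by_contra hc
    apply h
    ext i
    by_contra hne
    exact hc ⟨i, Finset.mem_filter.mpr ⟨Finset.mem_univ i, hne⟩⟩
  set i := (Finset.univ.filter fun i => a i ≠ b i).min' hs with hidef
  have hmem := (Finset.univ.filter fun i => a i ≠ b i).min'_mem hs
  have hne : a i ≠ b i := (Finset.mem_filter.mp hmem).2
  have hbefore : ∀ j < i, a j = b j := by
    intro j hj
    by_contra hcc
    exact absurd (Finset.min'_le _ j (Finset.mem_filter.mpr ⟨Finset.mem_univ j, hcc⟩)) (not_le.mpr hj)
  rcases lt_or_gt_of_ne hne with h' | h'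
  · exact Or.inl ⟨i, hbefore, h'⟩
  · exact Or.inr ⟨i, fun j hj => (hbefore j hj).symm, h'⟩

lemma mlexLt_add {a b : Fin n →₀ ℕ} (β : Fin n →₀ ℕ) (h : mlexLt a b) : mlexLt (a + β) (b + β) := by
  obtain ⟨i, hi, hlt⟩ := h
  exact ⟨i, fun j hj => by simp [Finsupp.add_apply, hi j hj], by simpa [Finsupp.add_apply] using hlt⟩

lemma idxLt_irrefl (L : Fin n → ℝ) (a : Idx n p) : ¬ idxLt L a a := by
  rintro (h | ⟨_, h | ⟨_, h⟩⟩)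
  · exact lt_irrefl _ h
  · exact lt_irrefl _ h
  · exact mlexLt_irrefl _ h

lemma idxLt_trans {L : Fin n → ℝ} {a b c : Idx n p} (h1 : idxLt L a b) (h2 : idxLt L b c) :
    idxLt L a c := by
  rcases h1 with h1 | ⟨e1, h1⟩ <;> rcases h2 with h2 | ⟨e2, h2⟩
  · exact Or.inl (h1.trans h2)
  · exact Or.inl (lt_of_lt_of_eq h1 e2)
  · exact Or.inl (lt_of_eq_of_lt e1 h2)
  · refine Or.inr ⟨e1.trans e2, ?_⟩
    rcases h1 with h1 | ⟨f1, m1⟩ <;> rcases h2 with h2 | ⟨f2, m2⟩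
    · exact Or.inl (h1.trans h2)
    · exact Or.inl (lt_of_lt_of_eq h1 f2)
    · exact Or.inl (lt_of_eq_of_lt f1 h2)
    · exact Or.inr ⟨f1.trans f2, mlexLt_trans m1 m2⟩

lemma idxLt_trichotomy (L : Fin n → ℝ) (a b : Idx n p) :
    idxLt L a b ∨ a = b ∨ idxLt L b a := by
  rcases lt_trichotomy (lval L a.1) (lval L b.1) with h | h | h
  · exact Or.inl (Or.inl h)
  · rcases lt_trichotomy a.2 b.2 with h2 | h2 | h2
    · exact Or.inl (Or.inr ⟨h, Or.inl h2⟩)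
    · by_cases h1 : a.1 = b.1
      · exact Or.inr (Or.inl (Prod.ext h1 h2))
      · rcases mlexLt_trichotomy h1 with hm | hm
        · exact Or.inl (Or.inr ⟨h, Or.inr ⟨h2, hm⟩⟩)
        · exact Or.inr (Or.inr (Or.inr ⟨h.symm, Or.inr ⟨h2.symm, hm⟩⟩))
    · exact Or.inr (Or.inr (Or.inr ⟨h.symm, Or.inl h2⟩))
  · exact Or.inr (Or.inr (Or.inl h))

lemma idxLt_add {L : Fin n → ℝ} {a b : Idx n p} (β : Fin n →₀ ℕ) (h : idxLt L a b) :
    idxLt L (a.1 + β, a.2) (b.1 + β, b.2) := by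
  rcases h with h | ⟨h, h2 | ⟨h2, h3⟩⟩
  · exact Or.inl (by simp only [lval_add]; linarith)
  · exact Or.inr ⟨by simp only [lval_add, h], Or.inl h2⟩
  · exact Or.inr ⟨by simp only [lval_add, h], Or.inr ⟨h2, mlexLt_add β h3⟩⟩

lemma finite_lower (L : Fin n → ℝ) (hL : ∀ i, 0 < L i) (e : Idx n p) :
    {d : Idx n p | idxLt L d e}.Finite := by
  classical
  set b : Fin n →₀ ℕ := Finsupp.equivFunOnFinite.symm fun i => ⌊lval L e.1 / L i⌋₊ with hb
  have hsub : {d : Idx n p | idxLt L d e} ⊆ (Set.Iic b) ×ˢ (Set.univ : Set (Fin p)) := by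
    rintro ⟨α, j⟩ hd
    have hle : lval L α ≤ lval L e.1 := by
      rcases hd with h | ⟨h, _⟩
      · exact h.le
      · exact le_of_eq h
    refine Set.mem_prod.mpr ⟨Set.mem_Iic.mpr ?_, trivial⟩
    rw [Finsupp.le_def]
    intro i
    have h1 : L i * (α i : ℝ) ≤ lval L α := by
      apply Finset.single_le_sum (f := fun i => L i * (α i : ℝ)) ?_ (Finset.mem_univ i)
      intro k _
      exact mul_nonneg (hL k).le (Nat.cast_nonneg _)
    have h2 : (α i : ℝ) ≤ lval L e.1 / L i := by
      rw [le_div_iff₀ (hL i)]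
      nlinarith
    have : α i ≤ ⌊lval L e.1 / L i⌋₊ := Nat.le_floor h2
    simpa [hb] using this
  exact ((Set.finite_Iic b).prod Set.finite_univ).subset hsub

lemma idxLt_wf (L : Fin n → ℝ) (hL : ∀ i, 0 < L i) :
    WellFounded (fun a b : Idx n p => idxLt L a b) := by
  have key : ∀ a b : Idx n p, idxLt L a b →
      ({d | idxLt L d a}).ncard < ({d | idxLt L d b}).ncard := by
    intro a b h
    apply Set.ncard_lt_ncard ?_ (finite_lower L hL b)
    exact (Set.ssubset_iff_of_subset (fun d hd => idxLt_trans hd h)).mpr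
      ⟨a, h, idxLt_irrefl L a⟩
  exact Subrelation.wf (key _ _) (InvImage.wf _ wellFounded_lt)


lemma mem_cone_iff {d e : Idx n p} : e ∈ cone d ↔ e.2 = d.2 ∧ d.1 ≤ e.1 := by
  constructor
  · rintro ⟨h, β, hβ⟩
    exact ⟨h, hβ ▸ le_self_add⟩
  · rintro ⟨h, hle⟩
    exact ⟨h, e.1 - d.1, (add_tsub_cancel_of_le hle).symm⟩

lemma Delta_subset_cone (v : Fin q → Idx n p) (i : Fin q) : Delta v i ⊆ cone (v i) :=
  Set.diff_subset

lemma Delta_unique {v : Fin q → Idx n p} {i k : Fin q} {e : Idx n p}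
    (hi : e ∈ Delta v i) (hk : e ∈ Delta v k) : i = k := by
  by_contra hne
  rcases lt_or_gt_of_ne hne with h | h
  · exact hk.2 (Set.mem_iUnion.mpr ⟨i, Set.mem_iUnion.mpr ⟨h, hi.1⟩⟩)
  · exact hi.2 (Set.mem_iUnion.mpr ⟨k, Set.mem_iUnion.mpr ⟨h, hk.1⟩⟩)

lemma exists_delta_of_not_deltaC {v : Fin q → Idx n p} {e : Idx n p}
    (h : e ∉ DeltaC v) : ∃ i, e ∈ Delta v i := by
  classical
  have : e ∈ ⋃ i, cone (v i) := by simpa [DeltaC] using h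
  obtain ⟨i₀, hi₀⟩ := Set.mem_iUnion.mp this
  have hs : (Finset.univ.filter fun i => e ∈ cone (v i)).Nonempty :=
    ⟨i₀, Finset.mem_filter.mpr ⟨Finset.mem_univ _, hi₀⟩⟩
  set i := (Finset.univ.filter fun i => e ∈ cone (v i)).min' hs with hidef
  refine ⟨i, (Finset.mem_filter.mp ((Finset.univ.filter fun i => e ∈ cone (v i)).min'_mem hs)).2, ?_⟩
  intro hcon
  obtain ⟨k, hk⟩ := Set.mem_iUnion.mp hcon
  obtain ⟨hklt, hkmem⟩ := Set.mem_iUnion.mp hk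
  exact absurd (Finset.min'_le _ k (Finset.mem_filter.mpr ⟨Finset.mem_univ _, hkmem⟩)) (not_le.mpr hklt)

lemma Delta_not_deltaC {v : Fin q → Idx n p} {i : Fin q} {e : Idx n p}
    (h : e ∈ Delta v i) : e ∉ DeltaC v := by
  intro hc
  exact hc (Set.mem_iUnion.mpr ⟨i, h.1⟩)

lemma not_cone_of_deltaC {v : Fin q → Idx n p} {e : Idx n p} (h : e ∈ DeltaC v) (i : Fin q) :
    e ∉ cone (v i) := fun hc => h (Set.mem_iUnion.mpr ⟨i, hc⟩)

lemma not_exists_delta_of_deltaC {v : Fin q → Idx n p} {e : Idx n p} (h : e ∈ DeltaC v) :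
    ¬ ∃ i, e ∈ Delta v i := by
  rintro ⟨i, hi⟩
  exact Delta_not_deltaC hi h


end Aux

section Series
variable {n p q : ℕ} {A : Type*} {K : Type*} [CommRing A] [Field K] [Algebra A K]
variable (L : Fin n → ℝ) (Φ : Fin q → (Fin p → MvPowerSeries (Fin n) A)) (v : Fin q → Idx n p)

open scoped Classical

/-- Image in `K` of a coefficient of `Φ i`. -/
noncomputable def phiC (i : Fin q) (γ : Fin n →₀ ℕ) (j : Fin p) : K :=
  algebraMap A K (MvPowerSeries.coeff γ (Φ i j))

/-- The "slot" of the coefficient of `Q i` at `β`. -/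
noncomputable def slotI (i : Fin q) (β : Fin n →₀ ℕ) : Idx n p := ((v i).1 + β, (v i).2)

lemma slot_cases (hv : ∀ i, IsExp L (Φ i) (v i)) (i : Fin q) (e : Idx n p) {β γ : Fin n →₀ ℕ}
    (hbg : β + γ = e.1) (hφ : phiC (K := K) Φ i γ e.2 ≠ 0) :
    idxLt L (slotI v i β) e ∨ (γ = (v i).1 ∧ e.2 = (v i).2) := by
  have hA : ((γ, e.2) : Idx n p) ∈ suppT (Φ i) := by
    intro h0
    exact hφ (by simp only [phiC]; rw [show MvPowerSeries.coeff γ (Φ i e.2) = 0 from h0, map_zero])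
  have hnlt : ¬ idxLt L ((γ, e.2) : Idx n p) (v i) := (hv i).2 _ hA
  rcases idxLt_trichotomy L ((γ, e.2) : Idx n p) (v i) with h | h | h
  · exact absurd h hnlt
  · obtain ⟨h1, h2⟩ := Prod.ext_iff.mp h
    exact Or.inr ⟨h1, h2⟩
  · left
    have h2 := idxLt_add β h
    have he : ((γ + β, e.2) : Idx n p) = e := by
      rw [add_comm γ β, hbg]
    rw [he] at h2
    exact h2

lemma coeff_mul_phi (hv : ∀ i, IsExp L (Φ i) (v i)) (Qi : MvPowerSeries (Fin n) K) (i : Fin q)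
    (e : Idx n p) :
    MvPowerSeries.coeff e.1 (Qi * MvPowerSeries.map (algebraMap A K) (Φ i e.2)) =
      (∑ bg ∈ Finset.HasAntidiagonal.antidiagonal e.1,
        if idxLt L (slotI v i bg.1) e then
          MvPowerSeries.coeff bg.1 Qi * phiC (K := K) Φ i bg.2 e.2 else 0)
      + (if e ∈ cone (v i) then
          MvPowerSeries.coeff (e.1 - (v i).1) Qi * phiC (K := K) Φ i (v i).1 (v i).2 else 0) := by
  classical
  rw [MvPowerSeries.coeff_mul]
  have step1 : ∀ bg ∈ Finset.HasAntidiagonal.antidiagonal e.1,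
      MvPowerSeries.coeff bg.1 Qi *
        MvPowerSeries.coeff bg.2 (MvPowerSeries.map (algebraMap A K) (Φ i e.2)) =
      (if idxLt L (slotI v i bg.1) e then
        MvPowerSeries.coeff bg.1 Qi * phiC (K := K) Φ i bg.2 e.2 else 0)
      + (if bg.2 = (v i).1 ∧ e.2 = (v i).2 then
        MvPowerSeries.coeff bg.1 Qi * phiC (K := K) Φ i bg.2 e.2 else 0) := by
    intro bg hbg
    rw [MvPowerSeries.coeff_map]
    have hφrw : (algebraMap A K) (MvPowerSeries.coeff bg.2 (Φ i e.2)) = phiC (K := K) Φ i bg.2 e.2 := rfl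
    rw [hφrw]
    by_cases h1 : idxLt L (slotI v i bg.1) e
    · rw [if_pos h1, if_neg, add_zero]
      rintro ⟨h2, h3⟩
      apply idxLt_irrefl L e
      have hse : slotI v i bg.1 = e := by
        have hsum := Finset.HasAntidiagonal.mem_antidiagonal.mp hbg
        refine Prod.ext ?_ h3.symm
        show (v i).1 + bg.1 = e.1
        rw [← hsum, h2, add_comm]
      rw [hse] at h1
      exact h1
    · by_cases h2 : bg.2 = (v i).1 ∧ e.2 = (v i).2
      · rw [if_neg h1, if_pos h2, zero_add]
      · rw [if_neg h1, if_neg h2, add_zero]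
        by_cases hφ : phiC (K := K) Φ i bg.2 e.2 = 0
        · rw [hφ, mul_zero]
        · rcases slot_cases L Φ v hv i e (Finset.HasAntidiagonal.mem_antidiagonal.mp hbg) hφ with h | h
          · exact absurd h h1
          · exact absurd h h2
  rw [Finset.sum_congr rfl step1, Finset.sum_add_distrib]
  congr 1
  by_cases hc : e ∈ cone (v i)
  · obtain ⟨he2, hle⟩ := mem_cone_iff.mp hc
    rw [if_pos hc, Finset.sum_eq_single ((e.1 - (v i).1, (v i).1) : (Fin n →₀ ℕ) × (Fin n →₀ ℕ))]
    · rw [if_pos ⟨rfl, he2⟩, he2]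
    · intro bg hbgmem hne
      apply if_neg
      rintro ⟨h2, _⟩
      apply hne
      have hsum := Finset.HasAntidiagonal.mem_antidiagonal.mp hbgmem
      have hb1 : bg.1 = e.1 - (v i).1 := by
        rw [← hsum, h2]
        ext a
        simp [Finsupp.tsub_apply, Finsupp.add_apply]
      exact Prod.ext hb1 h2
    · intro hnot
      exact absurd (Finset.HasAntidiagonal.mem_antidiagonal.mpr (tsub_add_cancel_of_le hle)) hnot
  · rw [if_neg hc]
    apply Finset.sum_eq_zero
    intro bg hbgmem
    apply if_neg
    rintro ⟨h2, h3⟩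
    apply hc
    apply mem_cone_iff.mpr
    refine ⟨h3, ?_⟩
    rw [← Finset.HasAntidiagonal.mem_antidiagonal.mp hbgmem, h2]
    exact le_add_self

/-- The combined support of quotients (through their slots) and remainder. -/
def SSet (Q : Fin q → MvPowerSeries (Fin n) K) (R : Fin p → MvPowerSeries (Fin n) K) :
    Set (Idx n p) :=
  {d | (∃ i, ∃ β ∈ suppS (Q i), d = slotI v i β) ∨ d ∈ suppT R}

lemma key_ne (hv : ∀ i, IsExp L (Φ i) (v i))
    (hcK : ∀ i, phiC (K := K) Φ i (v i).1 (v i).2 ≠ 0)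
    (Q : Fin q → MvPowerSeries (Fin n) K) (R : Fin p → MvPowerSeries (Fin n) K)
    (hQ : ∀ i, ∀ β ∈ suppS (Q i), slotI v i β ∈ Delta v i)
    (hR : suppT R ⊆ DeltaC v)
    (e : Idx n p) (he : e ∈ SSet v Q R) (hmin : ∀ d ∈ SSet v Q R, ¬ idxLt L d e) :
    (∑ i, MvPowerSeries.coeff e.1
        (Q i * MvPowerSeries.map (algebraMap A K) (Φ i e.2)))
      + MvPowerSeries.coeff e.1 (R e.2) ≠ 0 := by
  classical
  have hco : ∀ i : Fin q,
      MvPowerSeries.coeff e.1 (Q i * MvPowerSeries.map (algebraMap A K) (Φ i e.2)) =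
      (if e ∈ cone (v i) then
        MvPowerSeries.coeff (e.1 - (v i).1) (Q i) * phiC (K := K) Φ i (v i).1 (v i).2 else 0) := by
    intro i
    rw [coeff_mul_phi L Φ v hv (Q i) i e, Finset.sum_eq_zero, zero_add]
    intro bg _
    by_cases h1 : idxLt L (slotI v i bg.1) e
    · rw [if_pos h1]
      have hz : MvPowerSeries.coeff bg.1 (Q i) = 0 := by
        by_contra hcc
        exact hmin _ (Or.inl ⟨i, bg.1, hcc, rfl⟩) h1
      rw [hz, zero_mul]
    · exact if_neg h1
  rw [Finset.sum_congr rfl (fun i _ => hco i)]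
  rcases he with ⟨i₀, β₀, hβ₀, rfl⟩ | heR
  · have heΔ : slotI v i₀ β₀ ∈ Delta v i₀ := hQ i₀ β₀ hβ₀
    have hRz : MvPowerSeries.coeff (slotI v i₀ β₀).1 (R (slotI v i₀ β₀).2) = 0 := by
      by_contra hc
      exact Delta_not_deltaC heΔ (hR hc)
    rw [hRz, add_zero, Finset.sum_eq_single i₀]
    · rw [if_pos (Delta_subset_cone v i₀ heΔ)]
      have hβeq : (slotI v i₀ β₀).1 - (v i₀).1 = β₀ := by
        ext a
        simp [slotI, Finsupp.tsub_apply, Finsupp.add_apply]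
      rw [hβeq]
      exact mul_ne_zero hβ₀ (hcK i₀)
    · intro i _ hne
      by_cases hci : slotI v i₀ β₀ ∈ cone (v i)
      · rw [if_pos hci]
        have hz : MvPowerSeries.coeff ((slotI v i₀ β₀).1 - (v i).1) (Q i) = 0 := by
          by_contra hc
          have hmem := hQ i ((slotI v i₀ β₀).1 - (v i).1) hc
          have hslot : slotI v i ((slotI v i₀ β₀).1 - (v i).1) = slotI v i₀ β₀ := by
            obtain ⟨h2, hle⟩ := mem_cone_iff.mp hci
            exact Prod.ext (add_tsub_cancel_of_le hle) h2.symm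
          rw [hslot] at hmem
          exact hne (Delta_unique hmem heΔ)
        rw [hz, zero_mul]
      · exact if_neg hci
    · intro h
      exact absurd (Finset.mem_univ i₀) h
  · have heC : e ∈ DeltaC v := hR heR
    rw [Finset.sum_eq_zero, zero_add]
    · exact heR
    · intro i _
      exact if_neg (not_cone_of_deltaC heC i)

open scoped Classical in
/-- The coefficient function of the division, by well-founded recursion on the index. -/
noncomputable def divW (hL : ∀ i, 0 < L i) (F : Fin p → MvPowerSeries (Fin n) K) :
    Idx n p → K :=
  (idxLt_wf L hL).fix fun e ih =>
    if h2 : ∃ i, e ∈ Delta v i then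
      (phiC (K := K) Φ h2.choose (v h2.choose).1 (v h2.choose).2)⁻¹ *
        (MvPowerSeries.coeff e.1 (F e.2) -
          ∑ i : Fin q, ∑ bg ∈ Finset.HasAntidiagonal.antidiagonal e.1,
            if h : slotI v i bg.1 ∈ Delta v i ∧ idxLt L (slotI v i bg.1) e then
              ih (slotI v i bg.1) h.2 * phiC (K := K) Φ i bg.2 e.2 else 0)
    else
      MvPowerSeries.coeff e.1 (F e.2) -
        ∑ i : Fin q, ∑ bg ∈ Finset.HasAntidiagonal.antidiagonal e.1,
          if h : slotI v i bg.1 ∈ Delta v i ∧ idxLt L (slotI v i bg.1) e then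
            ih (slotI v i bg.1) h.2 * phiC (K := K) Φ i bg.2 e.2 else 0

open scoped Classical in
/-- The lower-order part of the coefficient sum. -/
noncomputable def TsumD (u : Idx n p → K) (e : Idx n p) : K :=
  ∑ i : Fin q, ∑ bg ∈ Finset.HasAntidiagonal.antidiagonal e.1,
    if h : slotI v i bg.1 ∈ Delta v i ∧ idxLt L (slotI v i bg.1) e then
      u (slotI v i bg.1) * phiC (K := K) Φ i bg.2 e.2 else 0

open scoped Classical in
lemma divW_eq (hL : ∀ i, 0 < L i) (F : Fin p → MvPowerSeries (Fin n) K) (e : Idx n p) :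
    divW L Φ v hL F e =
      if h2 : ∃ i, e ∈ Delta v i then
        (phiC (K := K) Φ h2.choose (v h2.choose).1 (v h2.choose).2)⁻¹ *
          (MvPowerSeries.coeff e.1 (F e.2) - TsumD L Φ v (divW L Φ v hL F) e)
      else MvPowerSeries.coeff e.1 (F e.2) - TsumD L Φ v (divW L Φ v hL F) e := by
  conv_lhs => rw [divW]
  rw [WellFounded.fix_eq]
  rfl

lemma divW_mem (hL : ∀ i, 0 < L i) (F : Fin p → MvPowerSeries (Fin n) K) (B : Subring K)
    (hAB : ∀ a : A, algebraMap A K a ∈ B)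
    (hSB : ∀ i, (phiC (K := K) Φ i (v i).1 (v i).2)⁻¹ ∈ B)
    (hF : ∀ e : Idx n p, MvPowerSeries.coeff e.1 (F e.2) ∈ B) :
    ∀ e, divW L Φ v hL F e ∈ B := by
  intro e
  refine (idxLt_wf L hL).induction (C := fun e => divW L Φ v hL F e ∈ B) e ?_
  intro e ih
  rw [divW_eq]
  have hT : TsumD L Φ v (divW L Φ v hL F) e ∈ B := by
    apply Subring.sum_mem
    intro i _
    apply Subring.sum_mem
    intro bg _
    split_ifs with h
    · exact B.mul_mem (ih _ h.2) (hAB _)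
    · exact B.zero_mem
  split_ifs with h2
  · exact B.mul_mem (hSB _) (B.sub_mem (hF e) hT)
  · exact B.sub_mem (hF e) hT

open scoped Classical in
/-- The quotients. -/
noncomputable def Qdiv (hL : ∀ i, 0 < L i) (F : Fin p → MvPowerSeries (Fin n) K) (i : Fin q) :
    MvPowerSeries (Fin n) K :=
  fun β => if slotI v i β ∈ Delta v i then divW L Φ v hL F (slotI v i β) else 0

open scoped Classical in
/-- The remainder. -/
noncomputable def Rdiv (hL : ∀ i, 0 < L i) (F : Fin p → MvPowerSeries (Fin n) K) (j : Fin p) :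
    MvPowerSeries (Fin n) K :=
  fun α => if ((α, j) : Idx n p) ∈ DeltaC v then divW L Φ v hL F (α, j) else 0

open scoped Classical in
lemma coeff_Qdiv (hL : ∀ i, 0 < L i) (F : Fin p → MvPowerSeries (Fin n) K) (i : Fin q)
    (β : Fin n →₀ ℕ) :
    MvPowerSeries.coeff β (Qdiv L Φ v hL F i) =
      if slotI v i β ∈ Delta v i then divW L Φ v hL F (slotI v i β) else 0 := rfl

open scoped Classical in
lemma coeff_Rdiv (hL : ∀ i, 0 < L i) (F : Fin p → MvPowerSeries (Fin n) K) (j : Fin p)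
    (α : Fin n →₀ ℕ) :
    MvPowerSeries.coeff α (Rdiv L Φ v hL F j) =
      if ((α, j) : Idx n p) ∈ DeltaC v then divW L Φ v hL F (α, j) else 0 := rfl

lemma div_eq (hL : ∀ i, 0 < L i) (hv : ∀ i, IsExp L (Φ i) (v i))
    (hcK : ∀ i, phiC (K := K) Φ i (v i).1 (v i).2 ≠ 0)
    (F : Fin p → MvPowerSeries (Fin n) K) (e : Idx n p) :
    MvPowerSeries.coeff e.1 (F e.2) =
      (∑ i, MvPowerSeries.coeff e.1
        (Qdiv L Φ v hL F i * MvPowerSeries.map (algebraMap A K) (Φ i e.2)))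
      + MvPowerSeries.coeff e.1 (Rdiv L Φ v hL F e.2) := by
  classical
  rw [Finset.sum_congr rfl (fun i _ => coeff_mul_phi L Φ v hv (Qdiv L Φ v hL F i) i e),
    Finset.sum_add_distrib]
  have hTs : (∑ i : Fin q, ∑ bg ∈ Finset.HasAntidiagonal.antidiagonal e.1,
      if idxLt L (slotI v i bg.1) e then
        MvPowerSeries.coeff bg.1 (Qdiv L Φ v hL F i) * phiC (K := K) Φ i bg.2 e.2 else 0) =
      TsumD L Φ v (divW L Φ v hL F) e := by
    apply Finset.sum_congr rfl
    intro i _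
    apply Finset.sum_congr rfl
    intro bg _
    rw [coeff_Qdiv]
    by_cases h1 : idxLt L (slotI v i bg.1) e <;> by_cases h2 : slotI v i bg.1 ∈ Delta v i <;>
      simp [h1, h2]
  rw [hTs]
  by_cases hC : e ∈ DeltaC v
  · have hdiag : (∑ i : Fin q, if e ∈ cone (v i) then
        MvPowerSeries.coeff (e.1 - (v i).1) (Qdiv L Φ v hL F i) *
          phiC (K := K) Φ i (v i).1 (v i).2 else 0) = 0 :=
      Finset.sum_eq_zero (fun i _ => if_neg (not_cone_of_deltaC hC i))
    have hRc : MvPowerSeries.coeff e.1 (Rdiv L Φ v hL F e.2) = divW L Φ v hL F e := by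
      rw [coeff_Rdiv]
      exact if_pos hC
    have hu : divW L Φ v hL F e =
        MvPowerSeries.coeff e.1 (F e.2) - TsumD L Φ v (divW L Φ v hL F) e := by
      rw [divW_eq, dif_neg (not_exists_delta_of_deltaC hC)]
    rw [hdiag, hRc, hu]
    ring
  · obtain ⟨i₀, hi₀⟩ := exists_delta_of_not_deltaC hC
    have hR0 : MvPowerSeries.coeff e.1 (Rdiv L Φ v hL F e.2) = 0 := by
      rw [coeff_Rdiv]
      exact if_neg hC
    have hci₀ : e ∈ cone (v i₀) := Delta_subset_cone v i₀ hi₀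
    have hdiag : (∑ i : Fin q, if e ∈ cone (v i) then
        MvPowerSeries.coeff (e.1 - (v i).1) (Qdiv L Φ v hL F i) *
          phiC (K := K) Φ i (v i).1 (v i).2 else 0) =
        divW L Φ v hL F e * phiC (K := K) Φ i₀ (v i₀).1 (v i₀).2 := by
      rw [Finset.sum_eq_single i₀]
      · rw [if_pos hci₀, coeff_Qdiv]
        have hslot : slotI v i₀ (e.1 - (v i₀).1) = e :=
          Prod.ext (add_tsub_cancel_of_le (mem_cone_iff.mp hci₀).2) (mem_cone_iff.mp hci₀).1.symm
        rw [hslot, if_pos hi₀]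
      · intro i _ hne
        by_cases hci : e ∈ cone (v i)
        · rw [if_pos hci, coeff_Qdiv]
          have hslot : slotI v i (e.1 - (v i).1) = e :=
            Prod.ext (add_tsub_cancel_of_le (mem_cone_iff.mp hci).2) (mem_cone_iff.mp hci).1.symm
          rw [hslot, if_neg, zero_mul]
          intro hmem
          exact hne (Delta_unique hmem hi₀)
        · exact if_neg hci
      · intro h
        exact absurd (Finset.mem_univ i₀) h
    have hex : ∃ i, e ∈ Delta v i := ⟨i₀, hi₀⟩
    have hu : divW L Φ v hL F e =
        (phiC (K := K) Φ i₀ (v i₀).1 (v i₀).2)⁻¹ *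
          (MvPowerSeries.coeff e.1 (F e.2) - TsumD L Φ v (divW L Φ v hL F) e) := by
      rw [divW_eq, dif_pos hex]
      have hch : hex.choose = i₀ := Delta_unique hex.choose_spec hi₀
      rw [hch]
    rw [hdiag, hR0, hu]
    have hc := hcK i₀
    field_simp
    ring
end Series


/-- **Hironaka's formal division algorithm** (Theorem 2.2). Division of an element of
`B[[x]]^p` by `Φ_1,…,Φ_q ∈ A[[x]]^p`, where `A` is an integral domain with fraction
field `K` and `B` is any subring of `K` containing `A` and the inverses of the initial
coefficients of the `Φ_i` (hence the localization `S⁻¹A`). -/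
theorem hironaka_formal_division
    {n p q : ℕ} (hn : 0 < n) (hp : 0 < p)
    {A : Type*} [CommRing A] [IsDomain A]
    {K : Type*} [Field K] [Algebra A K] [IsFractionRing A K]
    (L : Fin n → ℝ) (hL : ∀ i, 0 < L i)
    (Φ : Fin q → (Fin p → MvPowerSeries (Fin n) A))
    (hΦ : ∀ i, Φ i ≠ 0)
    (v : Fin q → Idx n p) (hv : ∀ i, IsExp L (Φ i) (v i))
    (B : Subring K)
    (hAB : ∀ a : A, algebraMap A K a ∈ B)
    (hSB : ∀ i, (algebraMap A K (MvPowerSeries.coeff (v i).1 (Φ i (v i).2)))⁻¹ ∈ B)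
    (F : Fin p → MvPowerSeries (Fin n) K)
    (hF : coeffsInT (· ∈ B) F) :
    -- existence and uniqueness of quotients and remainder
    (∃! QR : (Fin q → MvPowerSeries (Fin n) K) × (Fin p → MvPowerSeries (Fin n) K),
      (∀ i, coeffsIn (· ∈ B) (QR.1 i)) ∧ coeffsInT (· ∈ B) QR.2 ∧
      (∀ j, F j =
        (∑ i, QR.1 i * MvPowerSeries.map (algebraMap A K) (Φ i j)) + QR.2 j) ∧
      (∀ i, ∀ β ∈ suppS (QR.1 i), ((v i).1 + β, (v i).2) ∈ Delta v i) ∧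
      suppT QR.2 ⊆ DeltaC v) ∧
    -- moreover: bounds on the initial exponents of the quotients and the remainder
    (∀ (Q : Fin q → MvPowerSeries (Fin n) K) (R : Fin p → MvPowerSeries (Fin n) K),
      (∀ i, coeffsIn (· ∈ B) (Q i)) → coeffsInT (· ∈ B) R →
      (∀ j, F j =
        (∑ i, Q i * MvPowerSeries.map (algebraMap A K) (Φ i j)) + R j) →
      (∀ i, ∀ β ∈ suppS (Q i), ((v i).1 + β, (v i).2) ∈ Delta v i) →
      suppT R ⊆ DeltaC v →
      F ≠ 0 → ∀ e : Idx n p, IsExp L F e →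
        (∀ i, ∀ β : Fin n →₀ ℕ, IsExpS L (Q i) β → idxLe L e ((v i).1 + β, (v i).2)) ∧
        (R ≠ 0 → ∀ d : Idx n p, IsExp L R d → idxLe L e d)) := by
  classical
  have hcK : ∀ i, phiC (K := K) Φ i (v i).1 (v i).2 ≠ 0 := by
    intro i h0
    exact (hv i).1 (IsFractionRing.injective A K
      (show algebraMap A K _ = algebraMap A K 0 by rw [map_zero]; exact h0))
  have hF' : ∀ e : Idx n p, MvPowerSeries.coeff e.1 (F e.2) ∈ B := fun e => hF e.2 e.1
  have hQB : ∀ i, coeffsIn (· ∈ B) (Qdiv L Φ v hL F i) := by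
    intro i β
    rw [coeff_Qdiv]
    split_ifs with h
    · exact divW_mem L Φ v hL F B hAB hSB hF' _
    · exact B.zero_mem
  have hRB : coeffsInT (· ∈ B) (Rdiv L Φ v hL F) := by
    intro j α
    rw [coeff_Rdiv]
    split_ifs with h
    · exact divW_mem L Φ v hL F B hAB hSB hF' _
    · exact B.zero_mem
  have hQsup : ∀ i, ∀ β ∈ suppS (Qdiv L Φ v hL F i), ((v i).1 + β, (v i).2) ∈ Delta v i := by
    intro i β hβ
    by_contra hmem
    exact hβ (by rw [coeff_Qdiv]; exact if_neg hmem)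
  have hRsup : suppT (Rdiv L Φ v hL F) ⊆ DeltaC v := by
    intro e he
    by_contra hc
    apply he
    show MvPowerSeries.coeff e.1 (Rdiv L Φ v hL F e.2) = 0
    rw [coeff_Rdiv]
    exact if_neg hc
  have hEqn : ∀ j, F j =
      (∑ i, Qdiv L Φ v hL F i * MvPowerSeries.map (algebraMap A K) (Φ i j)) +
        Rdiv L Φ v hL F j := by
    intro j
    apply MvPowerSeries.ext
    intro α
    rw [map_add, map_sum]
    exact div_eq L Φ v hL hv hcK F (α, j)
  have huniq : ∀ (Q₁ Q₂ : Fin q → MvPowerSeries (Fin n) K)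
      (R₁ R₂ : Fin p → MvPowerSeries (Fin n) K),
      (∀ i, ∀ β ∈ suppS (Q₁ i), ((v i).1 + β, (v i).2) ∈ Delta v i) → suppT R₁ ⊆ DeltaC v →
      (∀ i, ∀ β ∈ suppS (Q₂ i), ((v i).1 + β, (v i).2) ∈ Delta v i) → suppT R₂ ⊆ DeltaC v →
      (∀ j, (∑ i, Q₁ i * MvPowerSeries.map (algebraMap A K) (Φ i j)) + R₁ j =
        (∑ i, Q₂ i * MvPowerSeries.map (algebraMap A K) (Φ i j)) + R₂ j) →
      Q₁ = Q₂ ∧ R₁ = R₂ := by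
    intro Q₁ Q₂ R₁ R₂ h1 hR1 h2 hR2 heq
    set Qd : Fin q → MvPowerSeries (Fin n) K := fun i => Q₁ i - Q₂ i with hQd
    set Rd : Fin p → MvPowerSeries (Fin n) K := fun j => R₁ j - R₂ j with hRd
    have hQds : ∀ i, ∀ β ∈ suppS (Qd i), slotI v i β ∈ Delta v i := by
      intro i β hβ
      by_cases hcc : MvPowerSeries.coeff β (Q₁ i) = 0
      · refine h2 i β ?_
        intro h0
        apply hβ
        show MvPowerSeries.coeff β (Qd i) = 0
        simp [hQd, map_sub, hcc, h0]
      · exact h1 i β hcc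
    have hRds : suppT Rd ⊆ DeltaC v := by
      intro d hd
      by_cases hcc : MvPowerSeries.coeff d.1 (R₁ d.2) = 0
      · refine hR2 ?_
        intro h0
        apply hd
        show MvPowerSeries.coeff d.1 (Rd d.2) = 0
        simp [hRd, map_sub, hcc, h0]
      · exact hR1 hcc
    have hEq0 : ∀ j, (∑ i, Qd i * MvPowerSeries.map (algebraMap A K) (Φ i j)) + Rd j
        = 0 := by
      intro j
      have hs : ∑ i, Qd i * MvPowerSeries.map (algebraMap A K) (Φ i j) =
          (∑ i, Q₁ i * MvPowerSeries.map (algebraMap A K) (Φ i j)) -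
            ∑ i, Q₂ i * MvPowerSeries.map (algebraMap A K) (Φ i j) := by
        rw [← Finset.sum_sub_distrib]
        apply Finset.sum_congr rfl
        intro i _
        simp [hQd, sub_mul]
      rw [hs]
      simp only [hRd]
      linear_combination heq j
    have hSS : SSet (K := K) v Qd Rd = ∅ := by
      by_contra hne
      obtain ⟨m, hm, hmin⟩ := (idxLt_wf L hL).has_min (SSet v Qd Rd)
        (Set.nonempty_iff_ne_empty.mpr hne)
      apply key_ne L Φ v hv hcK Qd Rd hQds hRds m hm hmin
      have hsplit : (∑ i, MvPowerSeries.coeff m.1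
            (Qd i * MvPowerSeries.map (algebraMap A K) (Φ i m.2)))
            + MvPowerSeries.coeff m.1 (Rd m.2)
          = MvPowerSeries.coeff m.1
            ((∑ i, Qd i * MvPowerSeries.map (algebraMap A K) (Φ i m.2)) + Rd m.2) := by
        rw [map_add, map_sum]
      rw [hsplit, hEq0, map_zero]
    constructor
    · funext i
      apply sub_eq_zero.mp
      apply MvPowerSeries.ext
      intro β
      rw [map_zero]
      by_contra hc
      have hmm : slotI v i β ∈ SSet (K := K) v Qd Rd := Or.inl ⟨i, β, hc, rfl⟩
      rw [hSS] at hmm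
      exact hmm
    · funext j
      apply sub_eq_zero.mp
      apply MvPowerSeries.ext
      intro α
      rw [map_zero]
      by_contra hc
      have hmm : ((α, j) : Idx n p) ∈ SSet (K := K) v Qd Rd := Or.inr hc
      rw [hSS] at hmm
      exact hmm
  constructor
  · refine ⟨⟨Qdiv L Φ v hL F, Rdiv L Φ v hL F⟩, ⟨hQB, hRB, hEqn, hQsup, hRsup⟩, ?_⟩
    rintro ⟨Q', R'⟩ ⟨hQ'B, hR'B, hEq', hQ's, hR's⟩
    have heq2 : ∀ j, (∑ i, Q' i * MvPowerSeries.map (algebraMap A K) (Φ i j)) + R' j =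
        (∑ i, Qdiv L Φ v hL F i * MvPowerSeries.map (algebraMap A K) (Φ i j)) +
          Rdiv L Φ v hL F j := fun j => (hEq' j).symm.trans (hEqn j)
    obtain ⟨hQe, hRe⟩ := huniq Q' (Qdiv L Φ v hL F) R' (Rdiv L Φ v hL F) hQ's hR's hQsup hRsup heq2
    exact Prod.ext hQe hRe
  · intro Q R _ _ hEq hQsupp hRsupp _ e he
    have key' : ∀ m ∈ SSet v Q R, (∀ d ∈ SSet v Q R, ¬ idxLt L d m) → m ∈ suppT F := by
      intro m hm hmin
      have hk := key_ne L Φ v hv hcK Q R hQsupp hRsupp m hm hmin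
      show MvPowerSeries.coeff m.1 (F m.2) ≠ 0
      rw [hEq m.2, map_add, map_sum]
      exact hk
    have main : ∀ s ∈ SSet v Q R, ¬ idxLt L s e := by
      intro s hs hlt
      obtain ⟨m, hm, hmin⟩ := (idxLt_wf L hL).has_min (SSet v Q R) ⟨s, hs⟩
      have hnm : ¬ idxLt L m e := he.2 m (key' m hm hmin)
      rcases idxLt_trichotomy L s m with h | h | h
      · exact hmin s hs h
      · exact hnm (h ▸ hlt)
      · exact hnm (idxLt_trans h hlt)
    constructor
    · intro i β hβ
      exact main (slotI v i β) (Or.inl ⟨i, β, hβ.1, rfl⟩)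
    · intro _ d hd
      exact main d (Or.inr hd.1)


end QDiv
end

section
/- Let A be an integral domain with fraction field K, and let Φ_1,…,Φ_q ∈ A[[x]]^p. Let M be the A[[x]]-submodule of A[[x]]^p generated by Φ_1,…,Φ_q, and let M' be the K[[x]]-submodule of K[[x]]^p generated by (the images of) Φ_1,…,Φ_q. Then N(M) = N(M'). -/
namespace QDiv

lemma lval_mono' {n : ℕ} {L : Fin n → ℝ} (hL : ∀ i, 0 < L i) {a b : Fin n →₀ ℕ}
    (h : a ≤ b) : lval L a ≤ lval L b := by
  refine Finset.sum_le_sum fun i _ => ?_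
  have := Finsupp.le_def.mp h i
  exact mul_le_mul_of_nonneg_left (by exact_mod_cast this) (hL i).le

lemma lval_le_finite' {n : ℕ} {L : Fin n → ℝ} (hL : ∀ i, 0 < L i) (C : ℝ) :
    {β : Fin n →₀ ℕ | lval L β ≤ C}.Finite := by
  classical
  set B : Fin n →₀ ℕ := Finsupp.equivFunOnFinite.symm (fun i => ⌈C / L i⌉₊) with hB
  refine (Set.finite_Icc 0 B).subset ?_
  intro β hβ
  simp only [Set.mem_setOf_eq, lval] at hβ
  refine Set.mem_Icc.mpr ⟨zero_le, ?_⟩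
  rw [Finsupp.le_def]
  intro i
  have h1 : L i * (β i : ℝ) ≤ ∑ j, L j * (β j : ℝ) := by
    refine Finset.single_le_sum (f := fun j => L j * (β j : ℝ)) ?_ (Finset.mem_univ i)
    exact fun j _ => mul_nonneg (hL j).le (Nat.cast_nonneg _)
  have h2 : (β i : ℝ) ≤ C / L i := (le_div_iff₀ (hL i)).mpr (by rw [mul_comm]; linarith)
  have h3 : (β i : ℝ) ≤ (⌈C / L i⌉₊ : ℝ) := h2.trans (Nat.le_ceil _)
  have hBi : B i = ⌈C / L i⌉₊ := by simp [hB]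
  rw [hBi]
  exact_mod_cast h3

/-- **Lemma 2.9.** The diagram of initial exponents of the `A[[x]]`-submodule of
`A[[x]]^p` generated by `Φ_1,…,Φ_q` coincides with the diagram of the
`K[[x]]`-submodule of `K[[x]]^p` they generate, where `K` is the fraction field of the
integral domain `A`. -/
theorem diagram_eq_diagram_fractionField
    {n p q : ℕ} (hn : 0 < n) (hp : 0 < p)
    {A : Type*} [CommRing A] [IsDomain A]
    {K : Type*} [Field K] [Algebra A K] [IsFractionRing A K]
    (L : Fin n → ℝ) (hL : ∀ i, 0 < L i)
    (Φ : Fin q → (Fin p → MvPowerSeries (Fin n) A)) :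
    diagram L (Submodule.span (MvPowerSeries (Fin n) A) (Set.range Φ)) =
      diagram L (Submodule.span (MvPowerSeries (Fin n) K)
        (Set.range fun i => fun j =>
          MvPowerSeries.map (algebraMap A K) (Φ i j))) := by
  classical
  have hinj : Function.Injective (algebraMap A K) := IsFractionRing.injective A K
  ext e
  simp only [diagram, Set.mem_setOf_eq]
  constructor
  · rintro ⟨F, hF, hFsupp, hFmin⟩
    obtain ⟨c, hc⟩ := (Submodule.mem_span_range_iff_exists_fun _).mp hF
    refine ⟨fun j => MvPowerSeries.map (algebraMap A K) (F j), ?_, ?_, ?_⟩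
    · rw [Submodule.mem_span_range_iff_exists_fun]
      refine ⟨fun l => MvPowerSeries.map (algebraMap A K) (c l), ?_⟩
      funext j
      rw [← hc]
      simp only [Finset.sum_apply, Pi.smul_apply, smul_eq_mul, map_sum, map_mul]
    · simpa only [suppT, Set.mem_setOf_eq, MvPowerSeries.coeff_map,
        map_ne_zero_iff _ hinj] using hFsupp
    · intro d hd
      apply hFmin d
      simpa only [suppT, Set.mem_setOf_eq, MvPowerSeries.coeff_map,
        map_ne_zero_iff _ hinj] using hd
  · rintro ⟨G, hG, hGsupp, hGmin⟩
    obtain ⟨c, hc⟩ := (Submodule.mem_span_range_iff_exists_fun _).mp hG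
    set C : ℝ := lval L e.1 with hC
    have hfin : {β : Fin n →₀ ℕ | lval L β ≤ C}.Finite := lval_le_finite' hL C
    obtain ⟨b, hb⟩ := IsLocalization.exist_integer_multiples (nonZeroDivisors A)
      (Finset.univ ×ˢ hfin.toFinset)
      (fun lb : Fin q × (Fin n →₀ ℕ) => MvPowerSeries.coeff lb.2 (c lb.1))
    have key : ∀ (l : Fin q) (β : Fin n →₀ ℕ), lval L β ≤ C →
        ∃ a : A, algebraMap A K a =
          algebraMap A K (b : A) * MvPowerSeries.coeff β (c l) := by
      intro l β hβ
      obtain ⟨a, ha⟩ := hb (l, β)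
        (by simp [Finset.mem_product, Set.Finite.mem_toFinset, hβ])
      exact ⟨a, by rw [← Algebra.smul_def]; exact ha⟩
    set b' : K := algebraMap A K (b : A) with hb'
    have hb'0 : b' ≠ 0 :=
      IsFractionRing.to_map_ne_zero_of_mem_nonZeroDivisors b.2
    let cA : Fin q → MvPowerSeries (Fin n) A := fun l =>
      (fun β => if h : lval L β ≤ C then (key l β h).choose else 0 :
        MvPowerSeries (Fin n) A)
    have hcA : ∀ (l : Fin q) (β : Fin n →₀ ℕ) (h : lval L β ≤ C),
        algebraMap A K (MvPowerSeries.coeff β (cA l)) =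
          b' * MvPowerSeries.coeff β (c l) := by
      intro l β h
      have h1 : MvPowerSeries.coeff β (cA l) = (key l β h).choose := by
        change (if h : lval L β ≤ C then (key l β h).choose else 0) = _
        exact dif_pos h
      rw [h1, (key l β h).choose_spec]
    set F : Fin p → MvPowerSeries (Fin n) A := ∑ l, cA l • Φ l with hF
    have hFmem : F ∈ Submodule.span (MvPowerSeries (Fin n) A) (Set.range Φ) :=
      Submodule.sum_mem _ fun l _ =>
        Submodule.smul_mem _ _ (Submodule.subset_span ⟨l, rfl⟩)
    have main : ∀ (α : Fin n →₀ ℕ), lval L α ≤ C → ∀ j,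
        algebraMap A K (MvPowerSeries.coeff α (F j)) =
          b' * MvPowerSeries.coeff α (G j) := by
      intro α hα j
      have hGa : MvPowerSeries.coeff α (G j) =
          ∑ l, ∑ uv ∈ Finset.HasAntidiagonal.antidiagonal α,
            MvPowerSeries.coeff uv.1 (c l) *
              MvPowerSeries.coeff uv.2
                (MvPowerSeries.map (algebraMap A K) (Φ l j)) := by
        rw [← hc]
        simp only [Finset.sum_apply, Pi.smul_apply, smul_eq_mul, map_sum,
          MvPowerSeries.coeff_mul]
      have hFa : MvPowerSeries.coeff α (F j) =
          ∑ l, ∑ uv ∈ Finset.HasAntidiagonal.antidiagonal α,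
            MvPowerSeries.coeff uv.1 (cA l) * MvPowerSeries.coeff uv.2 (Φ l j) := by
        rw [hF]
        simp only [Finset.sum_apply, Pi.smul_apply, smul_eq_mul, map_sum,
          MvPowerSeries.coeff_mul]
      rw [hFa, hGa, map_sum, Finset.mul_sum]
      refine Finset.sum_congr rfl fun l _ => ?_
      rw [map_sum, Finset.mul_sum]
      refine Finset.sum_congr rfl fun uv huv => ?_
      have hu : lval L uv.1 ≤ C := by
        refine le_trans (lval_mono' hL ?_) hα
        exact le_iff_exists_add.mpr ⟨uv.2, (Finset.HasAntidiagonal.mem_antidiagonal.mp huv).symm⟩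
      rw [map_mul, hcA l uv.1 hu, MvPowerSeries.coeff_map, mul_assoc]
    refine ⟨F, hFmem, ?_, ?_⟩
    · intro h0
      have hm := main e.1 le_rfl e.2
      have h00 : MvPowerSeries.coeff e.1 (F e.2) = 0 := h0
      rw [h00, map_zero] at hm
      have h2 := (mul_eq_zero.mp hm.symm).resolve_left hb'0
      exact hGsupp h2
    · intro d hd hlt
      have hdC : lval L d.1 ≤ C := hlt.elim le_of_lt (fun h => le_of_eq h.1)
      have hm := main d.1 hdC d.2
      have hd0 : MvPowerSeries.coeff d.1 (F d.2) ≠ 0 := hd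
      have hGd : MvPowerSeries.coeff d.1 (G d.2) ≠ 0 := by
        intro h0
        rw [h0, mul_zero] at hm
        exact hd0 (hinj (hm.trans (map_zero _).symm))
      exact hGmin d hGd hlt

end QDiv
end
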